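/- arXiv:2107.07358 — 3 statements merged into one kernel-verified Lean document; each statement's English description precedes it below -/
import Mathlib

section
/- Let S be a finite set of s ≥ 2 points in a Euclidean space ℝ^ℓ, let δ ≥ 2 and α ≥ 0, and suppose that ‖i−i'‖² ≥ δ·α for every pair of distinct points i, i' ∈ S. Then for every point j ∈ ℝ^ℓ, Σ_{i∈S} (α − ‖j−i‖²) ≤ (2 − δ/2)·α. -/
/-!
Summing `‖a i - a k‖² = ‖a i‖² + ‖a k‖² - 2⟪a i, a k⟫` over all pairs, with `a i = i - j`, gives
`Σᵢ Σₖ ‖i - k‖² = 2s Σᵢ ‖i - j‖² - 2‖Σᵢ (i - j)‖² ≤ 2s Σᵢ ‖i - j‖²`. The left side is at least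
`s(s-1)δα`, so `Σᵢ ‖j - i‖² ≥ (s-1)δα/2`, and the claim reduces to `(s-2)(δ-2)α ≥ 0`.
-/

open Finset RealInnerProductSpace

theorem Finset.card_sub_one_mul_le_sum_norm_sub_sq {ι E : Type*} [SeminormedAddCommGroup E]
    {s : Finset ι} {p : ι → E} {r : ℝ} {i : ι} (hi : i ∈ s)
    (hfar : ∀ k ∈ s, i ≠ k → r ≤ ‖p i - p k‖ ^ 2) :
    (#s - 1 : ℝ) * r ≤ ∑ k ∈ s, ‖p i - p k‖ ^ 2 := by
  classical
  rw [← sum_erase s (a := i) (f := fun k => ‖p i - p k‖ ^ 2) (by simp)]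
  have h := card_nsmul_le_sum (s.erase i) (fun k => ‖p i - p k‖ ^ 2) r
    fun k hk => hfar k (mem_of_mem_erase hk) (ne_of_mem_erase hk).symm
  rwa [card_erase_of_mem hi, nsmul_eq_mul, Nat.cast_pred (card_pos.2 ⟨i, hi⟩)] at h

section InnerProduct

variable {ι E : Type*} [NormedAddCommGroup E] [InnerProductSpace ℝ E]

theorem Finset.sum_sum_norm_sub_sq_add_two_mul_norm_sum_sq (s : Finset ι) (a : ι → E) :
    ∑ i ∈ s, ∑ k ∈ s, ‖a i - a k‖ ^ 2 + 2 * ‖∑ i ∈ s, a i‖ ^ 2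
      = 2 * #s * ∑ i ∈ s, ‖a i‖ ^ 2 := by
  have hsq : ‖∑ i ∈ s, a i‖ ^ 2 = ∑ i ∈ s, ∑ k ∈ s, ⟪a i, a k⟫ := by
    rw [← real_inner_self_eq_norm_sq, sum_inner]
    simp only [inner_sum]
  simp only [hsq, norm_sub_sq_real, sum_add_distrib, sum_sub_distrib, sum_const, nsmul_eq_mul,
    ← mul_sum]
  ring

theorem Finset.sum_sum_norm_sub_sq_le (s : Finset ι) (p : ι → E) (c : E) :
    ∑ i ∈ s, ∑ k ∈ s, ‖p i - p k‖ ^ 2 ≤ 2 * #s * ∑ i ∈ s, ‖p i - c‖ ^ 2 := by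
  have h := s.sum_sum_norm_sub_sq_add_two_mul_norm_sum_sq (fun i => p i - c)
  simp only [sub_sub_sub_cancel_right] at h
  nlinarith [sq_nonneg ‖∑ i ∈ s, (p i - c)‖]

theorem Finset.card_sub_one_mul_le_two_mul_sum_norm_sub_sq {s : Finset ι} (hs : s.Nonempty)
    {p : ι → E} {r : ℝ} (hfar : ∀ i ∈ s, ∀ k ∈ s, i ≠ k → r ≤ ‖p i - p k‖ ^ 2) (c : E) :
    (#s - 1 : ℝ) * r ≤ 2 * ∑ i ∈ s, ‖p i - c‖ ^ 2 := by
  have hcard : (0 : ℝ) < #s := by exact_mod_cast hs.card_pos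
  have hpairs : #s * ((#s - 1 : ℝ) * r) ≤ ∑ i ∈ s, ∑ k ∈ s, ‖p i - p k‖ ^ 2 := by
    simpa using card_nsmul_le_sum s _ _
      fun i hi => card_sub_one_mul_le_sum_norm_sub_sq hi (hfar i hi)
  have hupper := s.sum_sum_norm_sub_sq_le p c
  refine le_of_mul_le_mul_left ?_ hcard
  linarith

end InnerProduct

open Finset in
/-- Case B of the analysis of Ahmadian et al.: if `S` has `s ≥ 2` points that are
pairwise at squared distance at least `δ·α` with `δ ≥ 2`, `α ≥ 0`, then for every
point `j`, `Σ_{i∈S} (α − ‖j−i‖²) ≤ (2 − δ/2)·α`. -/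
theorem caseB_key_inequality {ℓ : ℕ} (S : Finset (EuclideanSpace ℝ (Fin ℓ)))
    (s : ℕ) (hS : S.card = s) (hs : 2 ≤ s) (δ α : ℝ) (hδ : δ ≥ 2) (hα : α ≥ 0)
    (hfar : ∀ i ∈ S, ∀ i' ∈ S, i ≠ i' → ‖i - i'‖ ^ 2 ≥ δ * α)
    (j : EuclideanSpace ℝ (Fin ℓ)) :
    ∑ i ∈ S, (α - ‖j - i‖ ^ 2) ≤ (2 - δ / 2) * α := by
  have hne : S.Nonempty := card_pos.1 (by omega)
  have hD := card_sub_one_mul_le_two_mul_sum_norm_sub_sq hne (p := id) hfar j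
  have hs' : (2 : ℝ) ≤ s := by exact_mod_cast hs
  simp only [id, hS] at hD
  simp only [sum_sub_distrib, sum_const, nsmul_eq_mul, hS, norm_sub_rev j]
  nlinarith [mul_nonneg (mul_nonneg (sub_nonneg.2 hs') (sub_nonneg.2 hδ)) hα]
end

section
/- Let s ≥ 2 be an integer, let δ > 2 and α > 0 be reals, and let Δ be a real number with Δ ≥ (s−1)·δ·α/2. Then Δ − (s−1)·α > 0 and Δ/s ≤ (δ/4)/(δ/2 − 1) · (Δ − (s−1)·α). -/
/-! With `c = δ/2 > 1` and `t = (s−1)·α > 0`, the hypothesis reads `Δ ≥ c·t`. Then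
`Δ − t ≥ (c − 1)·t > 0`, and `c·t ≤ Δ` is equivalent to `(c − 1)·Δ ≤ c·(Δ − t)`, i.e.
`Δ ≤ c/(c−1)·(Δ − t)`; halving and using `Δ/s ≤ Δ/2` gives the bound. -/

lemma le_div_sub_one_mul_sub {c t Δ : ℝ} (hc : 1 < c) (h : c * t ≤ Δ) :
    Δ ≤ c / (c - 1) * (Δ - t) := by
  rw [div_mul_eq_mul_div, le_div_iff₀ (sub_pos.mpr hc)]
  linarith

/-- The refined Case B bound (arithmetic form): for an integer `s ≥ 2`, reals `δ > 2`,
`α > 0`, and `Δ ≥ (s−1)·δ·α/2`, one has `Δ − (s−1)·α > 0` and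
`Δ/s ≤ (δ/4)/(δ/2 − 1) · (Δ − (s−1)·α)`. -/
theorem refined_caseB_arith (s : ℕ) (hs : 2 ≤ s) (δ α Δ : ℝ) (hδ : δ > 2) (hα : α > 0)
    (hΔ : Δ ≥ ((s : ℝ) - 1) * δ * α / 2) :
    Δ - ((s : ℝ) - 1) * α > 0 ∧
      Δ / (s : ℝ) ≤ (δ / 4) / (δ / 2 - 1) * (Δ - ((s : ℝ) - 1) * α) := by
  have hs' : (2 : ℝ) ≤ s := by exact_mod_cast hs
  have ht : 0 < ((s : ℝ) - 1) * α := mul_pos (by linarith) hα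
  have hc : 1 < δ / 2 := by linarith
  have hct : δ / 2 * (((s : ℝ) - 1) * α) ≤ Δ := by linarith
  have hgap : (δ / 2 - 1) * (((s : ℝ) - 1) * α) ≤ Δ - ((s : ℝ) - 1) * α := by linarith
  have hpos : Δ - ((s : ℝ) - 1) * α > 0 :=
    lt_of_lt_of_le (mul_pos (sub_pos.mpr hc) ht) hgap
  refine ⟨hpos, ?_⟩
  calc Δ / s ≤ Δ / 2 := div_le_div_of_nonneg_left (by linarith) two_pos hs'
    _ ≤ (δ / 2) / (δ / 2 - 1) * (Δ - ((s : ℝ) - 1) * α) / 2 := by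
        gcongr
        exact le_div_sub_one_mul_sub hc hct
    _ = (δ / 4) / (δ / 2 - 1) * (Δ - ((s : ℝ) - 1) * α) := by ring
end

section
/- δ₀ := (1/2)·(2 + (3−2√2)^{1/3} + (3+2√2)^{1/3}) is the unique real number δ with δ > 2 satisfying (δ/4)/(δ/2 − 1) = (1 + √δ)². -/
/-- The optimal parameter `δ₀` of the refined analysis. -/
noncomputable def δ₀ : ℝ :=
  (1 / 2) * (2 + (3 - 2 * Real.sqrt 2) ^ ((1 : ℝ) / 3) + (3 + 2 * Real.sqrt 2) ^ ((1 : ℝ) / 3))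

/-!
Writing `s = √δ`, for `δ > 2` the equation is the linear-in-`s` relation
`4 s (δ - 2) = 4 + 3δ - 2δ²`. Squaring it gives `(δ - 4) p(δ) = 0` with the cubic
`p(δ) = 4(δ - 1)³ - 3δ`, and the root `δ = 4` is spurious because the right-hand side is negative
there. Since `p(δ) + 2 = (δ - 2)(2δ - 1)²`, every real root of `p` exceeds `2`; as `p` is increasing
on `[3/2, ∞)`, there is only one, and it lies below `9/4`, where the right-hand side is nonnegative,
so squaring loses nothing. Finally `δ₀` is this
root by Cardano: with `u = δ - 1` the cubic reads `T₃(u) = 3` for the Chebyshev polynomial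
`T₃(u) = 4u³ - 3u`, and `T₃((a + a⁻¹)/2) = (a³ + a⁻³)/2`, here with `a³ = 3 + 2√2`, `a⁻³ = 3 - 2√2`.
-/

open Real Set

namespace JV

def cubic (δ : ℝ) : ℝ := 4 * (δ - 1) ^ 3 - 3 * δ

lemma cubic_strictMonoOn : StrictMonoOn cubic (Ici (3 / 2)) := by
  intro x hx y hy hxy
  simp only [mem_Ici] at hx hy
  have hfactor : cubic y - cubic x =
      (y - x) * (4 * ((x - 1) ^ 2 + (x - 1) * (y - 1) + (y - 1) ^ 2) - 3) := by
    unfold cubic; ring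
  have hquad : 0 < 4 * ((x - 1) ^ 2 + (x - 1) * (y - 1) + (y - 1) ^ 2) - 3 := by nlinarith
  nlinarith [mul_pos (sub_pos.mpr hxy) hquad]

lemma cubic_nine_fourths_pos : 0 < cubic (9 / 4) := by norm_num [cubic]

lemma two_lt_of_cubic_eq_zero {δ : ℝ} (h : cubic δ = 0) : 2 < δ := by
  by_contra! hle
  have hfactor : cubic δ + 2 = (δ - 2) * (2 * δ - 1) ^ 2 := by unfold cubic; ring
  nlinarith [mul_nonpos_of_nonpos_of_nonneg (sub_nonpos.mpr hle) (sq_nonneg (2 * δ - 1))]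

lemma lt_nine_fourths_of_cubic_eq_zero {δ : ℝ} (h : cubic δ = 0) : δ < 9 / 4 := by
  have hδ := two_lt_of_cubic_eq_zero h
  refine (cubic_strictMonoOn.lt_iff_lt ?_ ?_).mp (h ▸ cubic_nine_fourths_pos) <;>
    simp only [mem_Ici] <;> linarith

lemma sq_sub_sq_eq_mul_cubic {δ : ℝ} (hδ : 0 ≤ δ) :
    (4 * √δ * (δ - 2)) ^ 2 - (4 + 3 * δ - 2 * δ ^ 2) ^ 2 = (4 - δ) * cubic δ := by
  have hs : √δ ^ 2 = δ := sq_sqrt hδ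
  unfold cubic
  linear_combination (16 * (δ - 2) ^ 2) * hs

lemma div_eq_one_add_sqrt_sq_iff {δ : ℝ} (hδ : 2 < δ) :
    (δ / 4) / (δ / 2 - 1) = (1 + √δ) ^ 2 ↔ 4 * √δ * (δ - 2) = 4 + 3 * δ - 2 * δ ^ 2 := by
  have hs : √δ ^ 2 = δ := sq_sqrt (by linarith)
  rw [div_eq_iff (by linarith)]
  constructor <;> intro h
  · linear_combination (-4) * h + (4 - 2 * δ) * hs
  · linear_combination (-1 / 4) * h + (1 - δ / 2) * hs

lemma div_eq_one_add_sqrt_sq_iff_cubic_eq_zero {δ : ℝ} (hδ : 2 < δ) :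
    (δ / 4) / (δ / 2 - 1) = (1 + √δ) ^ 2 ↔ cubic δ = 0 := by
  have hsq := sq_sub_sq_eq_mul_cubic (by linarith : 0 ≤ δ)
  have hlhs : 0 ≤ 4 * √δ * (δ - 2) := by have := sqrt_nonneg δ; positivity
  rw [div_eq_one_add_sqrt_sq_iff hδ]
  constructor
  · intro h
    have hlt : δ < 4 := by nlinarith
    rw [h, sub_self] at hsq
    exact (mul_eq_zero.mp hsq.symm).resolve_left (by linarith)
  · intro h
    have hlt := lt_nine_fourths_of_cubic_eq_zero h
    rw [h, mul_zero, sub_eq_zero] at hsq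
    exact (sq_eq_sq₀ hlhs (by nlinarith)).mp hsq

lemma chebyshev_three_half_add {a b : ℝ} (hab : a * b = 1) :
    4 * ((a + b) / 2) ^ 3 - 3 * ((a + b) / 2) = (a ^ 3 + b ^ 3) / 2 := by
  linear_combination (3 / 2 * (a + b)) * hab

lemma rpow_one_third_pow_three {x : ℝ} (hx : 0 ≤ x) : (x ^ ((1 : ℝ) / 3)) ^ 3 = x := by
  simpa [one_div] using rpow_inv_natCast_pow hx (n := 3) (by norm_num)

lemma cubic_δ₀ : cubic δ₀ = 0 := by
  have hsqrt2 : √2 ^ 2 = 2 := sq_sqrt (by norm_num)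
  have hminus : 0 ≤ 3 - 2 * √2 := by nlinarith [sqrt_nonneg 2]
  have hplus : 0 ≤ 3 + 2 * √2 := by positivity
  have hprod : (3 - 2 * √2) ^ ((1 : ℝ) / 3) * (3 + 2 * √2) ^ ((1 : ℝ) / 3) = 1 := by
    rw [← mul_rpow hminus hplus,
      show (3 - 2 * √2) * (3 + 2 * √2) = 1 by linear_combination (-4) * hsqrt2, one_rpow]
  have hT₃ := chebyshev_three_half_add hprod
  rw [rpow_one_third_pow_three hminus, rpow_one_third_pow_three hplus] at hT₃
  unfold cubic δ₀
  linear_combination hT₃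

end JV

open JV in
/-- `δ₀` is the unique real `δ > 2` with `(δ/4)/(δ/2 − 1) = (1 + √δ)²`. -/
theorem δ₀_unique :
    (δ₀ > 2 ∧ (δ₀ / 4) / (δ₀ / 2 - 1) = (1 + Real.sqrt δ₀) ^ 2) ∧
      ∀ δ : ℝ, δ > 2 → (δ / 4) / (δ / 2 - 1) = (1 + Real.sqrt δ) ^ 2 → δ = δ₀ := by
  have hδ₀ : 2 < δ₀ := two_lt_of_cubic_eq_zero cubic_δ₀
  refine ⟨⟨hδ₀, (div_eq_one_add_sqrt_sq_iff_cubic_eq_zero hδ₀).mpr cubic_δ₀⟩, fun δ hδ h => ?_⟩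
  exact cubic_strictMonoOn.injOn (mem_Ici.mpr (by linarith)) (mem_Ici.mpr (by linarith))
    (((div_eq_one_add_sqrt_sq_iff_cubic_eq_zero hδ).mp h).trans cubic_δ₀.symm)
end
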